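/- Let I be a category and define an equivalence relation ∼ on the disjoint union of the endomorphism sets I(i,i) over all objects i, generated by m1 ∘ m2 ∼ m2 ∘ m1 for all composable pairs m1 : i ⟶ j, m2 : j ⟶ i. Then two objects (1_i, h) and (1_j, k) of dI lie in the same connected component of dI if and only if h ∼ k. -/

import Mathlib

open CategoryTheory

/-- Objects of the category `dI`: pairs of opposing morphisms `h1 : i ⟶ j`, `h2 : j ⟶ i`. -/
structure DObj (I : Type*) [Category I] where
  i : I
  j : I
  h1 : i ⟶ j
  h2 : j ⟶ i

/-- Morphisms of `dI` from `(h1, h2)` to `(k1, k2)`: pairs `(m1 : i' ⟶ i, m2 : j ⟶ j')`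
making the two evident squares commute. -/
@[ext]
structure DHom {I : Type*} [Category I] (A B : DObj I) where
  m1 : B.i ⟶ A.i
  m2 : A.j ⟶ B.j
  w1 : m1 ≫ A.h1 ≫ m2 = B.h1
  w2 : m2 ≫ B.h2 ≫ m1 = A.h2

instance (I : Type*) [Category I] : Category (DObj I) where
  Hom := DHom
  id A := ⟨𝟙 _, 𝟙 _, by simp, by simp⟩
  comp {A B C} f g :=
    ⟨g.m1 ≫ f.m1, f.m2 ≫ g.m2, by
      simp only [Category.assoc]
      slice_lhs 2 4 => rw [f.w1]
      simpa using g.w1, by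
      simp only [Category.assoc]
      slice_lhs 2 4 => rw [g.w2]
      simpa using f.w2⟩
  id_comp f := by apply DHom.ext <;> simp [CategoryStruct.comp, CategoryStruct.id]
  comp_id f := by apply DHom.ext <;> simp [CategoryStruct.comp, CategoryStruct.id]
  assoc f g h := by apply DHom.ext <;> simp [CategoryStruct.comp]


/-- The generating relation on the disjoint union of the endomorphism sets of `I`:
`m1 ∘ m2 ∼ m2 ∘ m1` for composable `m1 : i ⟶ j`, `m2 : j ⟶ i`. -/
def endRel (I : Type*) [Category I] (x y : Σ i : I, i ⟶ i) : Prop :=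
  ∃ (m1 : x.1 ⟶ y.1) (m2 : y.1 ⟶ x.1), x.2 = m1 ≫ m2 ∧ y.2 = m2 ≫ m1

/-!
Sending an object `(h1, h2)` of `dI` to the endomorphism `h1 ≫ h2` turns every morphism
`(m1, m2) : (h1, h2) ⟶ (k1, k2)` into an instance of the generating relation, since
`k1 ≫ k2 = m1 ≫ (h1 ≫ m2 ≫ k2)` and `h1 ≫ h2 = (h1 ≫ m2 ≫ k2) ≫ m1`; so objects in one
component have equivalent endomorphisms. Conversely, `m1 ≫ m2 ∼ m2 ≫ m1` is realised by the
cospan `(1, m1 ≫ m2) ⟶ (m1, m2) ⟵ (1, m2 ≫ m1)` in `dI`.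
-/

namespace DObj

variable {I : Type*} [Category I]

def endo (A : DObj I) : Σ i : I, i ⟶ i :=
  ⟨A.i, A.h1 ≫ A.h2⟩

def ofEndo (x : Σ i : I, i ⟶ i) : DObj I :=
  ⟨x.1, x.1, 𝟙 x.1, x.2⟩

lemma endRel_endo_of_hom {A B : DObj I} (f : A ⟶ B) : endRel I B.endo A.endo := by
  refine ⟨f.m1, A.h1 ≫ f.m2 ≫ B.h2, ?_, ?_⟩
  · simp only [endo, ← f.w1, Category.assoc]
  · simp only [endo, ← f.w2, Category.assoc]

lemma eqvGen_endRel_endo_of_zigzag {A B : DObj I} (z : Zigzag A B) :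
    Relation.EqvGen (endRel I) A.endo B.endo := by
  refine Relation.reflTransGen_le_of_equivalence_of_le
    (InvImage.equivalence _ endo (Relation.EqvGen.is_equivalence _)) ?_ _ _ z
  rintro X Y (⟨⟨f⟩⟩ | ⟨⟨f⟩⟩)
  · exact .symm _ _ (.rel _ _ (endRel_endo_of_hom f))
  · exact .rel _ _ (endRel_endo_of_hom f)

lemma zigzag_ofEndo_of_endRel {x y : Σ i : I, i ⟶ i} (hxy : endRel I x y) :
    Zigzag (ofEndo x) (ofEndo y) := by
  obtain ⟨m1, m2, hx, hy⟩ := hxy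
  let C : DObj I := ⟨x.1, y.1, m1, m2⟩
  have f : ofEndo x ⟶ C := ⟨𝟙 _, m1, by simp [ofEndo, C], by simp [ofEndo, C, hx]⟩
  have g : ofEndo y ⟶ C := ⟨m1, 𝟙 _, by simp [ofEndo, C], by simp [ofEndo, C, hy]⟩
  exact Zigzag.of_hom_inv f g

lemma zigzag_ofEndo_of_eqvGen {x y : Σ i : I, i ⟶ i} (e : Relation.EqvGen (endRel I) x y) :
    Zigzag (ofEndo x) (ofEndo y) :=
  (InvImage.equivalence _ ofEndo zigzag_equivalence).eqvGen_iff.mp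
    (Relation.EqvGen.mono (fun _ _ => zigzag_ofEndo_of_endRel) _ _ e)

end DObj

/-- For any category `I`, the objects `(1_i, h)` and `(1_j, k)` of `dI` lie
in the same connected component of `dI` iff `h ∼ k` for the equivalence relation generated
by `m1 ∘ m2 ∼ m2 ∘ m1`. -/
theorem stmt_3 {I : Type*} [Category I] {i j : I} (h : i ⟶ i) (k : j ⟶ j) :
    Zigzag (⟨i, i, 𝟙 i, h⟩ : DObj I) (⟨j, j, 𝟙 j, k⟩ : DObj I) ↔
      Relation.EqvGen (endRel I) ⟨i, h⟩ ⟨j, k⟩ := by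
  constructor
  · intro z
    simpa only [DObj.endo, Category.id_comp] using DObj.eqvGen_endRel_endo_of_zigzag z
  · exact DObj.zigzag_ofEndo_of_eqvGen
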